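/- arXiv:1810.11914 — 2 statements merged into one kernel-verified Lean document; each statement's English description precedes it below -/
import Mathlib

section
/- Let x₁,…,xₙ ∈ ℝ^d, y₁,…,yₙ ∈ {−1,+1}, ε ≥ 0, W > 0, and p, q ≥ 1 with 1/p + 1/q = 1. Define R̃ = (W/n)·E_σ[ ‖Σᵢ σᵢyᵢxᵢ − (εΣᵢσᵢ)·sgn(Σᵢσᵢyᵢxᵢ)‖_q ], the adversarial Rademacher complexity of {(x,y) ↦ min_{‖x'−x‖_∞≤ε} y⟨w,x'⟩ : ‖w‖_p ≤ W}. Then R̃ ≤ (W/n)E_σ[‖Σᵢσᵢyᵢxᵢ‖_q] + εW·d^{1/q}/√n. -/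
/-- Coordinatewise sign, with sgn(0) = 1. -/
noncomputable def sgn (t : ℝ) : ℝ := if 0 ≤ t then 1 else -1

/-- The ℓq norm of a vector in ℝ^d (for real q ≥ 1). -/
noncomputable def lqnorm (d : ℕ) (q : ℝ) (v : Fin d → ℝ) : ℝ :=
  (∑ i, |v i| ^ q) ^ (1 / q)

/-- Rademacher sign associated with a Boolean. -/
noncomputable def sg (b : Bool) : ℝ := if b then 1 else -1

lemma abs_sgn (t : ℝ) : |sgn t| = 1 := by
  unfold sgn; split <;> simp

lemma sg_sq (b : Bool) : sg b ^ 2 = 1 := by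
  unfold sg; cases b <;> norm_num

lemma sg_neg (b : Bool) : sg (!b) = - sg b := by
  cases b <;> simp [sg]

/-- Triangle inequality for the lq norm. -/
lemma lqnorm_sub_le (d : ℕ) (q : ℝ) (hq : 1 ≤ q) (u v : Fin d → ℝ) :
    lqnorm d q (fun j => u j - v j) ≤ lqnorm d q u + lqnorm d q v := by
  have := Real.Lp_add_le (Finset.univ : Finset (Fin d)) u (fun j => -(v j)) hq
  simpa [lqnorm, sub_eq_add_neg, abs_neg] using this

/-- lq norm of a vector with constant absolute value. -/
lemma lqnorm_const_abs (d : ℕ) (q : ℝ) (hq : 1 ≤ q) (c : ℝ) (hc : 0 ≤ c)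
    (v : Fin d → ℝ) (hv : ∀ j, |v j| = c) :
    lqnorm d q v = (d : ℝ) ^ (1 / q) * c := by
  have hq0 : q ≠ 0 := by linarith
  have : (∑ j : Fin d, |v j| ^ q) = (d : ℝ) * c ^ q := by
    simp [hv, Finset.sum_const, mul_comm]
  rw [lqnorm, this, Real.mul_rpow (by positivity) (by positivity),
    ← Real.rpow_mul hc, mul_one_div_cancel hq0, Real.rpow_one]

/-- For i ≠ j, the signs are orthogonal. -/
lemma sum_sg_mul_sg (n : ℕ) (i j : Fin n) (hij : i ≠ j) :
    ∑ s : Fin n → Bool, sg (s i) * sg (s j) = 0 := by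
  have hinv : Function.Involutive
      (fun s : Fin n → Bool => Function.update s i (!(s i))) := by
    intro s
    funext k
    by_cases hk : k = i
    · subst hk; simp
    · simp [Function.update_of_ne hk]
  have h1 : ∑ s : Fin n → Bool,
        sg (Function.update s i (!(s i)) i) * sg (Function.update s i (!(s i)) j)
      = ∑ s : Fin n → Bool, sg (s i) * sg (s j) :=
    Equiv.sum_comp hinv.toPerm (fun s => sg (s i) * sg (s j))
  have h2 : ∀ s : Fin n → Bool,
      sg (Function.update s i (!(s i)) i) * sg (Function.update s i (!(s i)) j)
        = -(sg (s i) * sg (s j)) := by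
    intro s
    rw [Function.update_self, Function.update_of_ne (Ne.symm hij), sg_neg]
    ring
  simp_rw [h2] at h1
  rw [Finset.sum_neg_distrib] at h1
  linarith

lemma sum_sq_sum_sg (n : ℕ) :
    ∑ s : Fin n → Bool, (∑ i, sg (s i)) ^ 2 = (n : ℝ) * 2 ^ n := by
  have : ∀ s : Fin n → Bool, (∑ i, sg (s i)) ^ 2
      = ∑ i : Fin n, ∑ j : Fin n, sg (s i) * sg (s j) := by
    intro s
    rw [sq, Finset.sum_mul_sum]
  simp_rw [this]
  rw [Finset.sum_comm]
  have : ∀ i : Fin n, ∑ s : Fin n → Bool, ∑ j : Fin n, sg (s i) * sg (s j)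
      = (2 : ℝ) ^ n := by
    intro i
    rw [Finset.sum_comm]
    have : ∀ j : Fin n, ∑ s : Fin n → Bool, sg (s i) * sg (s j)
        = if i = j then (2 : ℝ) ^ n else 0 := by
      intro j
      by_cases hij : i = j
      · subst hij
        simp only [if_pos rfl, ← sq]
        simp [sg_sq, Finset.card_univ]
      · rw [if_neg hij]
        exact sum_sg_mul_sg n i j hij
    simp_rw [this]
    simp
  simp_rw [this]
  simp [Finset.card_univ, mul_comm]

/-- Expected absolute value of the Rademacher sum is at most √n · 2^n. -/
lemma sum_abs_sum_sg (n : ℕ) :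
    ∑ s : Fin n → Bool, |∑ i, sg (s i)| ≤ Real.sqrt n * 2 ^ n := by
  have h := Real.sum_mul_le_sqrt_mul_sqrt (Finset.univ : Finset (Fin n → Bool))
    (fun s => |∑ i, sg (s i)|) (fun _ => 1)
  simp only [mul_one, one_pow] at h
  have h1 : ∑ s : Fin n → Bool, |∑ i, sg (s i)| ^ 2 = (n : ℝ) * 2 ^ n := by
    simp_rw [sq_abs]; exact sum_sq_sum_sg n
  have h2 : ∑ _s : Fin n → Bool, (1 : ℝ) = 2 ^ n := by
    simp [Finset.card_univ]
  rw [h1, h2] at h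
  calc ∑ s : Fin n → Bool, |∑ i, sg (s i)|
      ≤ Real.sqrt ((n : ℝ) * 2 ^ n) * Real.sqrt (2 ^ n) := h
    _ = Real.sqrt n * 2 ^ n := by
        rw [Real.sqrt_mul (by positivity), mul_assoc,
          Real.mul_self_sqrt (by positivity)]

/-- Upper bound: the adversarial Rademacher complexity
R̃ = (W/n)·E_σ‖Σᵢσᵢyᵢxᵢ − (εΣᵢσᵢ)·sgn(Σᵢσᵢyᵢxᵢ)‖_q is at most
(W/n)·E_σ‖Σᵢσᵢyᵢxᵢ‖_q + εW·d^{1/q}/√n. -/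
theorem stmt_9 (n d : ℕ) (hn : 0 < n) (x : Fin n → Fin d → ℝ) (y : Fin n → ℝ)
    (hy : ∀ i, y i = 1 ∨ y i = -1) (ε W p q : ℝ) (hε : 0 ≤ ε) (hW : 0 < W)
    (hp : 1 ≤ p) (hq : 1 ≤ q) (hpq : 1 / p + 1 / q = 1) :
    (∑ s : Fin n → Bool, (W / n) *
        lqnorm d q (fun j => (∑ i, sg (s i) * y i * x i j)
          - (ε * ∑ i, sg (s i)) * sgn (∑ i, sg (s i) * y i * x i j))) / 2 ^ n ≤
      (∑ s : Fin n → Bool, (W / n) *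
          lqnorm d q (fun j => ∑ i, sg (s i) * y i * x i j)) / 2 ^ n
        + ε * W * (d : ℝ) ^ (1 / q) / Real.sqrt n := by
  set A : (Fin n → Bool) → Fin d → ℝ :=
    fun s j => ∑ i, sg (s i) * y i * x i j with hA
  have hWn : (0 : ℝ) < W / n := by positivity
  -- pointwise bound
  have key : ∀ s : Fin n → Bool,
      lqnorm d q (fun j => A s j - (ε * ∑ i, sg (s i)) * sgn (A s j))
        ≤ lqnorm d q (A s) + (d : ℝ) ^ (1 / q) * (ε * |∑ i, sg (s i)|) := by
    intro s
    have htri := lqnorm_sub_le d q hq (A s)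
      (fun j => (ε * ∑ i, sg (s i)) * sgn (A s j))
    have hcst : lqnorm d q (fun j => (ε * ∑ i, sg (s i)) * sgn (A s j))
        = (d : ℝ) ^ (1 / q) * (ε * |∑ i, sg (s i)|) := by
      apply lqnorm_const_abs d q hq _ (by positivity)
      intro j
      rw [abs_mul, abs_sgn, mul_one, abs_mul, abs_of_nonneg hε]
    linarith
  -- sum the bound
  have hsum : (∑ s : Fin n → Bool, (W / n) *
        lqnorm d q (fun j => A s j - (ε * ∑ i, sg (s i)) * sgn (A s j)))
      ≤ (∑ s : Fin n → Bool, (W / n) * lqnorm d q (A s))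
        + (W / n) * ((d : ℝ) ^ (1 / q) * ε) * (∑ s : Fin n → Bool, |∑ i, sg (s i)|) := by
    rw [Finset.mul_sum, ← Finset.sum_add_distrib]
    apply Finset.sum_le_sum
    intro s _
    have := key s
    have h2 := mul_le_mul_of_nonneg_left this hWn.le
    calc (W / n) * lqnorm d q (fun j => A s j - (ε * ∑ i, sg (s i)) * sgn (A s j))
        ≤ (W / n) * (lqnorm d q (A s) + (d : ℝ) ^ (1 / q) * (ε * |∑ i, sg (s i)|)) := h2
      _ = (W / n) * lqnorm d q (A s)
          + (W / n) * ((d : ℝ) ^ (1 / q) * ε) * |∑ i, sg (s i)| := by ring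
  have habs := sum_abs_sum_sg n
  have hd : (0 : ℝ) ≤ (d : ℝ) ^ (1 / q) := by positivity
  have hpow : (0 : ℝ) < 2 ^ n := by positivity
  have hsn : (0 : ℝ) < Real.sqrt n := Real.sqrt_pos.mpr (by exact_mod_cast hn)
  have hn0 : (n : ℝ) ≠ 0 := by positivity
  have h3 : Real.sqrt n / (n : ℝ) = 1 / Real.sqrt n := by
    rw [div_eq_div_iff hn0 hsn.ne', Real.mul_self_sqrt (by positivity), one_mul]
  have hfinal : (W / n) * ((d : ℝ) ^ (1 / q) * ε) * (Real.sqrt n * 2 ^ n) / 2 ^ n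
      = ε * W * (d : ℝ) ^ (1 / q) / Real.sqrt n := by
    calc (W / n) * ((d : ℝ) ^ (1 / q) * ε) * (Real.sqrt n * 2 ^ n) / 2 ^ n
        = ε * W * (d : ℝ) ^ (1 / q) * (Real.sqrt n / n) * (2 ^ n / 2 ^ n) := by
          ring
      _ = ε * W * (d : ℝ) ^ (1 / q) / Real.sqrt n := by
          rw [div_self hpow.ne', h3]; ring
  calc (∑ s : Fin n → Bool, (W / n) *
        lqnorm d q (fun j => A s j - (ε * ∑ i, sg (s i)) * sgn (A s j))) / 2 ^ n
      ≤ ((∑ s : Fin n → Bool, (W / n) * lqnorm d q (A s))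
        + (W / n) * ((d : ℝ) ^ (1 / q) * ε) * (∑ s : Fin n → Bool, |∑ i, sg (s i)|))
          / 2 ^ n := by gcongr
    _ ≤ ((∑ s : Fin n → Bool, (W / n) * lqnorm d q (A s))
        + (W / n) * ((d : ℝ) ^ (1 / q) * ε) * (Real.sqrt n * 2 ^ n)) / 2 ^ n := by
        have hC : (0 : ℝ) ≤ (W / n) * ((d : ℝ) ^ (1 / q) * ε) := by positivity
        gcongr
    _ = (∑ s : Fin n → Bool, (W / n) * lqnorm d q (A s)) / 2 ^ n
        + (W / n) * ((d : ℝ) ^ (1 / q) * ε) * (Real.sqrt n * 2 ^ n) / 2 ^ n := by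
        rw [add_div]
    _ = (∑ s : Fin n → Bool, (W / n) * lqnorm d q (A s)) / 2 ^ n
        + ε * W * (d : ℝ) ^ (1 / q) / Real.sqrt n := by rw [hfinal]
end

section
/- With the same setup, R̃ ≥ (cεW·d^{1/q})/√n for a universal constant c > 0, where c is the Khintchine constant satisfying E[|Σᵢσᵢ|] ≥ c√n. -/
/-!
Flipping every Rademacher sign negates both `Σᵢ σᵢ yᵢ xᵢ` and `Σᵢ σᵢ`, so averaging the
expectation over `σ` and `-σ` pairs each perturbed vector `v - (εΣσᵢ)·sgn v` with
`-v + (εΣσᵢ)·sgn (-v)`. Coordinatewise these two have absolute values summing to at least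
`2ε|Σσᵢ|` (triangle inequality), so by Minkowski their ℓq norms sum to at least
`2ε|Σσᵢ|·d^{1/q}`. Hence `R̃ ≥ (W/n)·ε·d^{1/q}·E|Σσᵢ|`, and Khintchine's bound
`E|Σσᵢ| ≥ c√n` finishes.
-/

open Finset

lemma sg_not (b : Bool) : sg (!b) = -sg b := by
  cases b <;> simp [sg]

/-- Stated with `sgn (-a)` rather than `-sgn a`: the two differ at `a = 0`, where `sgn 0 = 1`. -/
lemma two_mul_abs_le_abs_sub_mul_sgn_add (a b : ℝ) :
    2 * |b| ≤ |a - b * sgn a| + |-a - -b * sgn (-a)| := by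
  generalize hX : a - b * sgn a = X
  generalize hY : -a - -b * sgn (-a) = Y
  unfold sgn at hX hY
  split_ifs at hX hY <;> cases abs_cases b <;>
    linarith [le_abs_self X, neg_le_abs X, le_abs_self Y, neg_le_abs Y]

section lqnorm

variable {d : ℕ} {q : ℝ}

lemma lqnorm_add_le (hq : 1 ≤ q) (u w : Fin d → ℝ) :
    lqnorm d q (u + w) ≤ lqnorm d q u + lqnorm d q w :=
  Real.Lp_add_le univ u w hq

lemma lqnorm_abs (u : Fin d → ℝ) : lqnorm d q (fun j => |u j|) = lqnorm d q u := by
  simp only [lqnorm, abs_abs]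

lemma lqnorm_mono (hq : 0 < q) {u w : Fin d → ℝ} (h : ∀ j, |u j| ≤ |w j|) :
    lqnorm d q u ≤ lqnorm d q w := by
  unfold lqnorm
  gcongr (∑ j, ?_ ^ q) ^ _ with j
  exact h j

lemma lqnorm_const (hq : 0 < q) (M : ℝ) :
    lqnorm d q (fun _ => M) = |M| * (d : ℝ) ^ (1 / q) := by
  rw [lqnorm, sum_const, card_univ, Fintype.card_fin, nsmul_eq_mul,
    Real.mul_rpow (by positivity) (by positivity), ← Real.rpow_mul (abs_nonneg M),
    mul_one_div_cancel hq.ne', Real.rpow_one, mul_comm]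

lemma lqnorm_le_add_of_abs_le (hq : 1 ≤ q) {t u w : Fin d → ℝ}
    (h : ∀ j, |t j| ≤ |u j| + |w j|) :
    lqnorm d q t ≤ lqnorm d q u + lqnorm d q w :=
  calc lqnorm d q t ≤ lqnorm d q ((fun j => |u j|) + fun j => |w j|) :=
        lqnorm_mono (by linarith) fun j => (h j).trans (le_abs_self _)
    _ ≤ lqnorm d q u + lqnorm d q w := by
        simpa only [lqnorm_abs] using lqnorm_add_le hq (fun j => |u j|) (fun j => |w j|)

lemma two_mul_abs_mul_rpow_le_lqnorm_sub_mul_sgn_add (hq : 1 ≤ q) (v : Fin d → ℝ) (b : ℝ) :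
    2 * |b| * (d : ℝ) ^ (1 / q) ≤ lqnorm d q (fun j => v j - b * sgn (v j)) +
      lqnorm d q (fun j => -v j - -b * sgn (-v j)) := by
  have hconst : lqnorm d q (fun _ => 2 * |b|) = 2 * |b| * (d : ℝ) ^ (1 / q) := by
    rw [lqnorm_const (by linarith), abs_of_nonneg (by positivity)]
  rw [← hconst]
  refine lqnorm_le_add_of_abs_le hq fun j => ?_
  rw [abs_of_nonneg (by positivity)]
  exact two_mul_abs_le_abs_sub_mul_sgn_add (v j) b

end lqnorm

lemma sum_le_two_mul_sum_of_involutive {α : Type*} [Fintype α] {f : α → α}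
    (hf : Function.Involutive f) {g F : α → ℝ} (h : ∀ a, g a ≤ F a + F (f a)) :
    ∑ a, g a ≤ 2 * ∑ a, F a :=
  calc ∑ a, g a ≤ ∑ a, (F a + F (f a)) := sum_le_sum fun a _ => h a
    _ = 2 * ∑ a, F a := by
        rw [sum_add_distrib, Fintype.sum_bijective f hf.bijective _ F fun _ => rfl]
        ring

lemma mul_rpow_mul_sum_abs_le_sum_lqnorm {n d : ℕ} {q ε : ℝ} (hq : 1 ≤ q) (hε : 0 ≤ ε)
    (z : Fin n → Fin d → ℝ) :
    ε * (d : ℝ) ^ (1 / q) * ∑ s : Fin n → Bool, |∑ i, sg (s i)| ≤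
      ∑ s : Fin n → Bool, lqnorm d q (fun j => (∑ i, sg (s i) * z i j)
        - (ε * ∑ i, sg (s i)) * sgn (∑ i, sg (s i) * z i j)) := by
  have hflip : Function.Involutive fun (s : Fin n → Bool) i => !s i := fun s => by
    funext i; simp
  have hpair := sum_le_two_mul_sum_of_involutive hflip
    (g := fun s => 2 * |ε * ∑ i, sg (s i)| * (d : ℝ) ^ (1 / q))
    (F := fun s => lqnorm d q (fun j => (∑ i, sg (s i) * z i j)
        - (ε * ∑ i, sg (s i)) * sgn (∑ i, sg (s i) * z i j))) fun s => by
      simpa only [sg_not, neg_mul, mul_neg, sum_neg_distrib, neg_neg] using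
        two_mul_abs_mul_rpow_le_lqnorm_sub_mul_sgn_add hq
          (fun j => ∑ i, sg (s i) * z i j) (ε * ∑ i, sg (s i))
  have hg : ∑ s : Fin n → Bool, 2 * |ε * ∑ i, sg (s i)| * (d : ℝ) ^ (1 / q) =
      2 * (ε * (d : ℝ) ^ (1 / q) * ∑ s : Fin n → Bool, |∑ i, sg (s i)|) := by
    rw [mul_sum, mul_sum]
    refine sum_congr rfl fun s _ => ?_
    rw [abs_mul, abs_of_nonneg hε]
    ring
  linarith

theorem stmt_11_general (n d : ℕ) (hn : 0 < n) (x : Fin n → Fin d → ℝ) (y : Fin n → ℝ)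
    (ε W q c : ℝ) (hε : 0 ≤ ε) (hW : 0 < W) (hq : 1 ≤ q)
    (hkh : c * Real.sqrt n ≤ (∑ s : Fin n → Bool, |∑ i, sg (s i)|) / 2 ^ n) :
    c * ε * W * (d : ℝ) ^ (1 / q) / Real.sqrt n ≤
      (∑ s : Fin n → Bool, (W / n) *
          lqnorm d q (fun j => (∑ i, sg (s i) * y i * x i j)
            - (ε * ∑ i, sg (s i)) * sgn (∑ i, sg (s i) * y i * x i j))) / 2 ^ n := by
  have hkh' : c * Real.sqrt n * 2 ^ n ≤ ∑ s : Fin n → Bool, |∑ i, sg (s i)| :=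
    (le_div_iff₀ (by positivity)).1 hkh
  have hsum := mul_rpow_mul_sum_abs_le_sum_lqnorm (n := n) (d := d) hq hε
    fun i j => y i * x i j
  simp only [← mul_assoc] at hsum
  rw [← mul_sum]
  calc c * ε * W * (d : ℝ) ^ (1 / q) / Real.sqrt n
      = W / n * (ε * (d : ℝ) ^ (1 / q) * (c * Real.sqrt n * 2 ^ n)) / 2 ^ n := by
        field_simp
        rw [Real.sq_sqrt (Nat.cast_nonneg n)]
    _ ≤ W / n * (ε * (d : ℝ) ^ (1 / q) * ∑ s : Fin n → Bool, |∑ i, sg (s i)|) / 2 ^ n := by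
        gcongr
    _ ≤ _ := by gcongr W / n * ?_ / _

/-- Lower bound: for any Khintchine constant c > 0 with E[|Σᵢσᵢ|] ≥ c√n,
the adversarial Rademacher complexity
R̃ = (W/n)·E_σ‖Σᵢσᵢyᵢxᵢ − (εΣᵢσᵢ)·sgn(Σᵢσᵢyᵢxᵢ)‖_q satisfies
R̃ ≥ cεW·d^{1/q}/√n. -/
theorem stmt_11 (n d : ℕ) (hn : 0 < n) (x : Fin n → Fin d → ℝ) (y : Fin n → ℝ)
    (hy : ∀ i, y i = 1 ∨ y i = -1) (ε W p q c : ℝ) (hε : 0 ≤ ε) (hW : 0 < W)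
    (hp : 1 ≤ p) (hq : 1 ≤ q) (hpq : 1 / p + 1 / q = 1) (hc : 0 < c)
    (hkh : c * Real.sqrt n ≤ (∑ s : Fin n → Bool, |∑ i, sg (s i)|) / 2 ^ n) :
    c * ε * W * (d : ℝ) ^ (1 / q) / Real.sqrt n ≤
      (∑ s : Fin n → Bool, (W / n) *
          lqnorm d q (fun j => (∑ i, sg (s i) * y i * x i j)
            - (ε * ∑ i, sg (s i)) * sgn (∑ i, sg (s i) * y i * x i j))) / 2 ^ n :=
  stmt_11_general n d hn x y ε W q c hε hW hq hkh
end
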